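/- arXiv:1507.02940 — 7 statements merged into one kernel-verified Lean document; each statement's English description precedes it below -/
import Mathlib

section
/- Let V(S,I) = ½(S − Ŝ₀ + I)² + aI with a = (2(μ+α)+γ+p₀)/β₀. Along solutions of the constant-coefficient SIRS system, V' = −(S−Ŝ₀)²(p₀+μ+α) − I²(γ+α+μ) − aβ₀I((γ+μ)/β₀ − Ŝ₀). In particular, if β₀Ŝ₀ ≤ γ+μ then V' ≤ 0 on the simplex, with V' < 0 whenever (S,I) ≠ (Ŝ₀,0) and I > 0. -/
/-!
With `x = S - Ŝ₀`, the identity `Ŝ₀ (p₀ + μ + α) = μ + α` turns the total rate `S' + I'` into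
`-(p₀ + μ + α) x - (γ + α + μ) I`. Hence `V' = (x + I)(S' + I') + a I'`, and the weight `a` is
chosen so that `a β₀ = (p₀ + μ + α) + (γ + α + μ)`: the cross term `x I` from the first product
then cancels against `a β₀ x I` from `a I' = a I (β₀ x + β₀ Ŝ₀ - (γ + μ))`, leaving a negative
definite quadratic form plus a term whose sign is that of `β₀ Ŝ₀ - (γ + μ)`.
-/

theorem hasDerivAt_half_sq_add_add_mul {u v : ℝ → ℝ} {u' v' t : ℝ} (c a : ℝ)
    (hu : HasDerivAt u u' t) (hv : HasDerivAt v v' t) :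
    HasDerivAt (fun τ => 1 / 2 * (u τ - c + v τ) ^ 2 + a * v τ)
      ((u t - c + v t) * (u' + v') + a * v') t := by
  have h := ((((hu.sub_const c).fun_add hv).fun_pow 2).const_mul (1 / 2 : ℝ)).fun_add
    (hv.const_mul a)
  exact h.congr_deriv (by ring)

theorem sirs_lyapunov_rate_eq {μ α γ β₀ p₀ S0 a : ℝ} (hβ : β₀ ≠ 0)
    (hS0 : S0 * (p₀ + μ + α) = μ + α) (ha : a * β₀ = 2 * (μ + α) + γ + p₀) (s i : ℝ) :
    (s - S0 + i) * ((μ + α * (1 - s - i) - β₀ * i * s - p₀ * s - μ * s)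
        + (β₀ * i * s - (γ + μ) * i)) + a * (β₀ * i * s - (γ + μ) * i)
      = -(s - S0) ^ 2 * (p₀ + μ + α) - i ^ 2 * (γ + α + μ)
        - a * β₀ * i * ((γ + μ) / β₀ - S0) := by
  have hdiv : a * β₀ * i * ((γ + μ) / β₀) = a * i * (γ + μ) := by field_simp
  linear_combination (-(s - S0 + i)) * hS0 + (i * (s - S0)) * ha + hdiv

theorem neg_sq_mul_sub_sq_mul_sub_mul_nonpos {x y c d k m : ℝ} (hc : 0 ≤ c) (hd : 0 ≤ d)
    (hk : 0 ≤ k) (hm : 0 ≤ m) (hy : 0 ≤ y) : -x ^ 2 * c - y ^ 2 * d - k * y * m ≤ 0 := by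
  nlinarith [mul_nonneg (sq_nonneg x) hc, mul_nonneg (sq_nonneg y) hd,
    mul_nonneg (mul_nonneg hk hy) hm]

theorem neg_sq_mul_sub_sq_mul_sub_mul_neg {x y c d k m : ℝ} (hc : 0 ≤ c) (hd : 0 < d)
    (hk : 0 ≤ k) (hm : 0 ≤ m) (hy : 0 < y) : -x ^ 2 * c - y ^ 2 * d - k * y * m < 0 := by
  nlinarith [mul_nonneg (sq_nonneg x) hc, mul_pos (pow_pos hy 2) hd,
    mul_nonneg (mul_nonneg hk hy.le) hm]

theorem sirs_lyapunov_derivative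
    (μ α γ β₀ p₀ : ℝ) (hμ : 0 < μ) (hα : 0 < α) (hγ : 0 < γ)
    (hβ : 0 < β₀) (hp : 0 ≤ p₀)
    (S0 : ℝ) (hS0 : S0 = (μ + α) / (p₀ + μ + α))
    (a : ℝ) (ha : a = (2 * (μ + α) + γ + p₀) / β₀)
    (S I : ℝ → ℝ) (t : ℝ)
    (hS : HasDerivAt S
      (μ + α * (1 - S t - I t) - β₀ * I t * S t - p₀ * S t - μ * S t) t)
    (hI : HasDerivAt I (β₀ * I t * S t - (γ + μ) * I t) t) :
    HasDerivAt (fun τ => (1 / 2) * (S τ - S0 + I τ) ^ 2 + a * I τ)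
      (-(S t - S0) ^ 2 * (p₀ + μ + α) - (I t) ^ 2 * (γ + α + μ)
        - a * β₀ * I t * ((γ + μ) / β₀ - S0)) t
    ∧ (β₀ * S0 ≤ γ + μ →
        (0 ≤ I t →
          -(S t - S0) ^ 2 * (p₀ + μ + α) - (I t) ^ 2 * (γ + α + μ)
            - a * β₀ * I t * ((γ + μ) / β₀ - S0) ≤ 0)
        ∧ ((S t, I t) ≠ (S0, 0) → 0 < I t →
          -(S t - S0) ^ 2 * (p₀ + μ + α) - (I t) ^ 2 * (γ + α + μ)
            - a * β₀ * I t * ((γ + μ) / β₀ - S0) < 0)) := by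
  have hS0' : S0 * (p₀ + μ + α) = μ + α := by
    rw [hS0]; exact div_mul_cancel₀ _ (by positivity)
  have haβ : a * β₀ = 2 * (μ + α) + γ + p₀ := by
    rw [ha]; exact div_mul_cancel₀ _ hβ.ne'
  refine ⟨(hasDerivAt_half_sq_add_add_mul S0 a hS hI).congr_deriv
    (sirs_lyapunov_rate_eq hβ.ne' hS0' haβ (S t) (I t)), fun hR₀ => ?_⟩
  have hc : 0 ≤ p₀ + μ + α := by positivity
  have hd : 0 < γ + α + μ := by positivity
  have hk : 0 ≤ a * β₀ := by rw [haβ]; positivity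
  have hm : 0 ≤ (γ + μ) / β₀ - S0 :=
    sub_nonneg.2 ((le_div_iff₀ hβ).2 (by linarith))
  exact ⟨neg_sq_mul_sub_sq_mul_sub_mul_nonpos hc hd.le hk hm,
    fun _ => neg_sq_mul_sub_sq_mul_sub_mul_neg hc hd hk hm⟩
end

section
/- Suppose β is continuously differentiable, T-periodic, positive, and satisfies β'(t) ≥ −(μ+α)β(t)(β(t)/(γ+μ) − 1) for all t. Then p_opt(t) := (μ+α)(β(t)/(γ+μ) − 1) + β'(t)/β(t) is nonnegative, and the corresponding periodic disease-free solution satisfies β(t)·S₀[p_opt](t) = γ+μ for all t. -/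
/-!
Nonnegativity of `popt` is the hypothesis on `β'` divided by `β > 0`. For the second claim, with
`popt` plugged in, `v := β S - (γ + μ)` solves the homogeneous linear equation
`v' = -((μ + α) / (γ + μ)) β v`, whose coefficient has positive mean over a period; a periodic
solution of `v' = -q v` with `∫₀ᵀ q ≠ 0` vanishes, because `v · exp (∫₀ᵗ q)` is constant while the
exponential factor changes over a period.
-/

open Real

theorem hasDerivAt_mul_exp_integral_eq_zero {q u : ℝ → ℝ} (hq : Continuous q)
    {t : ℝ} (hu : HasDerivAt u (-(q t * u t)) t) :
    HasDerivAt (fun t => u t * exp (∫ s in (0 : ℝ)..t, q s)) 0 t := by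
  have hI : HasDerivAt (fun t => ∫ s in (0 : ℝ)..t, q s) (q t) t :=
    intervalIntegral.integral_hasDerivAt_right (hq.intervalIntegrable _ _)
      (hq.stronglyMeasurableAtFilter _ _) hq.continuousAt
  refine (hu.mul hI.exp).congr_deriv ?_
  ring

theorem Function.Periodic.eq_zero_of_hasDerivAt_neg_mul {q u : ℝ → ℝ} {T : ℝ} (hq : Continuous q)
    (hu : ∀ t, HasDerivAt u (-(q t * u t)) t) (huT : Function.Periodic u T)
    (hqT : ∫ s in (0 : ℝ)..T, q s ≠ 0) (t : ℝ) : u t = 0 := by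
  set w : ℝ → ℝ := fun t => u t * exp (∫ s in (0 : ℝ)..t, q s)
  have hw : ∀ t, HasDerivAt w 0 t := fun t => hasDerivAt_mul_exp_integral_eq_zero hq (hu t)
  have hw_const : ∀ t, w t = u 0 := fun t => by
    simpa [w] using is_const_of_deriv_eq_zero (fun x => (hw x).differentiableAt)
      (fun x => (hw x).deriv) t 0
  have hu0 : u 0 = 0 := by
    have hwT : u 0 * exp (∫ s in (0 : ℝ)..T, q s) = u 0 := by
      simpa [w, show u T = u 0 by simpa using huT 0] using hw_const T
    have hexp : exp (∫ s in (0 : ℝ)..T, q s) ≠ 1 := by simpa using hqT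
    by_contra h
    exact hexp ((mul_eq_left₀ h).mp hwT)
  have hwt : u t * exp (∫ s in (0 : ℝ)..t, q s) = 0 := (hw_const t).trans hu0
  exact (mul_eq_zero.mp hwt).resolve_right (exp_ne_zero _)

theorem hasDerivAt_mul_sub_of_optimal {μ α γ : ℝ} (hγμ : γ + μ ≠ 0) {β S p : ℝ → ℝ} {b' t : ℝ}
    (hβ : HasDerivAt β b' t) (hβt : β t ≠ 0)
    (hp : p t = (μ + α) * (β t / (γ + μ) - 1) + b' / β t)
    (hS : HasDerivAt S (μ + α - (p t + μ + α) * S t) t) :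
    HasDerivAt (fun t => β t * S t - (γ + μ))
      (-((μ + α) / (γ + μ) * β t * (β t * S t - (γ + μ)))) t := by
  refine ((hβ.mul hS).sub_const (γ + μ)).congr_deriv ?_
  rw [hp]
  field_simp
  ring

theorem optimal_strategy_formula_general
    (μ α γ T : ℝ) (hμ : 0 < μ) (hα : 0 < α) (hγ : 0 < γ) (hT : 0 < T)
    (β β' : ℝ → ℝ) (hβ : ∀ t, HasDerivAt β (β' t) t)
    (hβpos : ∀ t, 0 < β t)
    (hβper : Function.Periodic β T)
    (hcond : ∀ t, β' t ≥ -(μ + α) * β t * (β t / (γ + μ) - 1))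
    (popt : ℝ → ℝ)
    (hpopt : ∀ t, popt t = (μ + α) * (β t / (γ + μ) - 1) + β' t / β t) :
    (∀ t, 0 ≤ popt t) ∧
    ∀ S : ℝ → ℝ,
      (∀ t, HasDerivAt S (μ + α - (popt t + μ + α) * S t) t) →
      Function.Periodic S T →
      ∀ t, β t * S t = γ + μ := by
  refine ⟨fun t => ?_, fun S hS hSper t => ?_⟩
  · have hpβ : popt t = ((μ + α) * (β t / (γ + μ) - 1) * β t + β' t) / β t := by
      rw [hpopt t, add_div, mul_div_cancel_right₀ _ (hβpos t).ne']
    rw [hpβ]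
    exact div_nonneg (by linarith [hcond t]) (hβpos t).le
  · have hγμ : 0 < γ + μ := by linarith
    have hβc : Continuous β := continuous_iff_continuousAt.mpr fun t => (hβ t).continuousAt
    have hq : Continuous fun t => (μ + α) / (γ + μ) * β t := continuous_const.mul hβc
    have hqT : 0 < ∫ s in (0 : ℝ)..T, (μ + α) / (γ + μ) * β s :=
      intervalIntegral.intervalIntegral_pos_of_pos_on (hq.intervalIntegrable _ _)
        (fun s _ => mul_pos (by positivity) (hβpos s)) hT
    have hv := Function.Periodic.eq_zero_of_hasDerivAt_neg_mul hq
      (fun t => hasDerivAt_mul_sub_of_optimal hγμ.ne' (hβ t) (hβpos t).ne' (hpopt t) (hS t))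
      (fun t => by simp only [hβper t, hSper t]) hqT.ne' t
    exact sub_eq_zero.mp hv

theorem optimal_strategy_formula
    (μ α γ T : ℝ) (hμ : 0 < μ) (hα : 0 < α) (hγ : 0 < γ) (hT : 0 < T)
    (β β' : ℝ → ℝ) (hβ : ∀ t, HasDerivAt β (β' t) t)
    (hβ'c : Continuous β') (hβpos : ∀ t, 0 < β t)
    (hβper : Function.Periodic β T)
    (hcond : ∀ t, β' t ≥ -(μ + α) * β t * (β t / (γ + μ) - 1))
    (popt : ℝ → ℝ)
    (hpopt : ∀ t, popt t = (μ + α) * (β t / (γ + μ) - 1) + β' t / β t) :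
    (∀ t, 0 ≤ popt t) ∧
    ∀ S : ℝ → ℝ,
      (∀ t, HasDerivAt S (μ + α - (popt t + μ + α) * S t) t) →
      Function.Periodic S T →
      ∀ t, β t * S t = γ + μ :=
  optimal_strategy_formula_general μ α γ T hμ hα hγ hT β β' hβ hβpos hβper hcond popt hpopt
end

section
/- For any continuous positive T-periodic β, the optimal vaccination effort satisfies 𝔼[p_opt] ≤ p₀(μ+α)/(p₀+μ+α) < μ+α, where p₀ = (μ+α)(β̄/(γ+μ) − 1) with β̄ = sup β; i.e. the optimal strategy vaccinates on average strictly less than μ+α per unit time. -/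
open intervalIntegral

/-- A strategy `p` is preventive for transmission `β` if it is continuous,
nonnegative, `T`-periodic, and the corresponding `T`-periodic disease-free
susceptible solution `S` satisfies `β t * S t < γ + μ` for all `t`. -/
def Preventive (μ α γ T : ℝ) (β p S : ℝ → ℝ) : Prop :=
  Continuous p ∧ (∀ t, 0 ≤ p t) ∧ Function.Periodic p T ∧
  (∀ t, HasDerivAt S (μ + α - (p t + μ + α) * S t) t) ∧
  Function.Periodic S T ∧
  ∀ t, β t * S t < γ + μ

/-! The infimum of the efforts of preventive strategies is bounded above by the effort of the
constant strategies `q > p₀`, which are preventive because `S ≡ (μ + α) / (q + μ + α)` stays below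
`(γ + μ) / β̄`; letting `q ↓ p₀` gives the bound. The set of efforts is bounded below by `0`
because a periodic solution of `S' = a - q S` with `a > 0`, `q ≥ 0` is positive: at its minimum
`S' = 0`, so `q S = a > 0` there. -/

open Filter Topology

namespace Function.Periodic

theorem exists_forall_le_of_continuous {α : Type*} [LinearOrder α] [TopologicalSpace α]
    [ClosedIicTopology α] {f : ℝ → α} {c : ℝ} (hp : Periodic f c) (hc : c ≠ 0)
    (hf : Continuous f) : ∃ t₀, ∀ t, f t₀ ≤ f t := by
  obtain ⟨_, ⟨t₀, rfl⟩, hleast⟩ :=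
    (hp.compact_of_continuous hc hf).exists_isLeast (Set.range_nonempty f)
  exact ⟨t₀, fun t => hleast ⟨t, rfl⟩⟩

theorem le_sSup_image_Icc {f : ℝ → ℝ} {c : ℝ} (hp : Periodic f c) (hc : 0 < c)
    (hf : Continuous f) (t : ℝ) : f t ≤ sSup (f '' Set.Icc 0 c) := by
  have hrange : f '' Set.Icc 0 c = Set.range f := by simpa using hp.image_Icc hc 0
  rw [hrange]
  exact le_csSup (hp.compact_of_continuous hc.ne' hf).bddAbove ⟨t, rfl⟩

theorem pos_of_hasDerivAt_sub_mul {a c : ℝ} {q S : ℝ → ℝ} (hS : Periodic S c) (hc : c ≠ 0)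
    (ha : 0 < a) (hq : ∀ t, 0 ≤ q t) (hderiv : ∀ t, HasDerivAt S (a - q t * S t) t) (t : ℝ) :
    0 < S t := by
  obtain ⟨t₀, hmin⟩ := hS.exists_forall_le_of_continuous hc
    (continuous_iff_continuousAt.2 fun t => (hderiv t).continuousAt)
  have hcrit : a - q t₀ * S t₀ = 0 :=
    IsLocalMin.hasDerivAt_eq_zero (Filter.Eventually.of_forall hmin) (hderiv t₀)
  have hS₀ : 0 < S t₀ := by
    by_contra! h
    nlinarith [mul_nonpos_of_nonneg_of_nonpos (hq t₀) h]
  exact hS₀.trans_le (hmin t)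

end Function.Periodic

/-- The efforts `𝔼[p]` of the preventive strategies; `𝔼[p_opt]` is their infimum. -/
def preventiveEfforts (μ α γ T : ℝ) (β : ℝ → ℝ) : Set ℝ :=
  {e | ∃ p S : ℝ → ℝ, Preventive μ α γ T β p S ∧ e = (1 / T) * ∫ t in (0:ℝ)..T, p t * S t}

section Efforts

variable {μ α γ T : ℝ} {β : ℝ → ℝ}

theorem Preventive.susceptible_pos {p S : ℝ → ℝ} (h : Preventive μ α γ T β p S)
    (hμα : 0 < μ + α) (hT : T ≠ 0) (t : ℝ) : 0 < S t := by
  obtain ⟨-, hp, -, hderiv, hSper, -⟩ := h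
  exact hSper.pos_of_hasDerivAt_sub_mul hT hμα (fun t => by linarith [hp t]) hderiv t

theorem bddBelow_preventiveEfforts (hμα : 0 < μ + α) (hT : 0 < T) :
    BddBelow (preventiveEfforts μ α γ T β) := by
  refine ⟨0, ?_⟩
  rintro _ ⟨p, S, h, rfl⟩
  have hint : 0 ≤ ∫ t in (0:ℝ)..T, p t * S t :=
    integral_nonneg hT.le fun t _ => mul_nonneg (h.2.1 t) (h.susceptible_pos hμα hT.ne' t).le
  positivity

theorem preventive_const {q : ℝ} (hμα : 0 < μ + α) (hq : 0 ≤ q)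
    (hβ : ∀ t, β t * ((μ + α) / (q + μ + α)) < γ + μ) :
    Preventive μ α γ T β (fun _ => q) (fun _ => (μ + α) / (q + μ + α)) := by
  have hequil : μ + α - (q + μ + α) * ((μ + α) / (q + μ + α)) = 0 := by
    rw [mul_div_cancel₀ _ (by linarith), sub_self]
  refine ⟨continuous_const, fun _ => hq, fun _ => rfl, fun t => ?_, fun _ => rfl, hβ⟩
  rw [hequil]
  exact hasDerivAt_const t _

theorem const_mem_preventiveEfforts {q : ℝ} (hμα : 0 < μ + α) (hT : T ≠ 0) (hq : 0 ≤ q)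
    (hβ : ∀ t, β t * ((μ + α) / (q + μ + α)) < γ + μ) :
    q * (μ + α) / (q + μ + α) ∈ preventiveEfforts μ α γ T β := by
  refine ⟨_, _, preventive_const hμα hq hβ, ?_⟩
  rw [integral_const, smul_eq_mul, sub_zero]
  field_simp

end Efforts

theorem optimal_effort_bound_general
    (μ α γ T : ℝ) (hμ : 0 < μ) (hα : 0 < α) (hγ : 0 < γ) (hT : 0 < T)
    (β : ℝ → ℝ) (hβc : Continuous β)
    (hβper : Function.Periodic β T)
    (βbar : ℝ) (hβbar : βbar = sSup (β '' Set.Icc 0 T))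
    (hβbargt : γ + μ < βbar)
    (p₀ : ℝ) (hp₀ : p₀ = (μ + α) * (βbar / (γ + μ) - 1)) :
    sInf {e : ℝ | ∃ p S : ℝ → ℝ, Preventive μ α γ T β p S ∧
        e = (1 / T) * ∫ t in (0:ℝ)..T, p t * S t}
      ≤ p₀ * (μ + α) / (p₀ + μ + α)
    ∧ p₀ * (μ + α) / (p₀ + μ + α) < μ + α := by
  have hγμ : 0 < γ + μ := by linarith
  have hμα : 0 < μ + α := by linarith
  have hthreshold : (γ + μ) * (p₀ + μ + α) = (μ + α) * βbar := by
    rw [hp₀]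
    field_simp
    ring
  have hp₀pos : 0 < p₀ := by nlinarith
  have hmem : ∀ q > p₀, q * (μ + α) / (q + μ + α) ∈ preventiveEfforts μ α γ T β := by
    intro q hq
    refine const_mem_preventiveEfforts hμα hT.ne' (by linarith) fun t => ?_
    have hβt : β t ≤ βbar := hβbar ▸ hβper.le_sSup_image_Icc hT hβc t
    rw [← mul_div_assoc, div_lt_iff₀ (by linarith)]
    nlinarith
  have hlim : Tendsto (fun q => q * (μ + α) / (q + μ + α)) (𝓝[>] p₀)
      (𝓝 (p₀ * (μ + α) / (p₀ + μ + α))) := by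
    refine ContinuousAt.tendsto ?_ |>.mono_left nhdsWithin_le_nhds
    fun_prop (disch := positivity)
  refine ⟨ge_of_tendsto hlim ?_, ?_⟩
  · exact eventually_nhdsWithin_of_forall fun q hq =>
      csInf_le (bddBelow_preventiveEfforts hμα hT) (hmem q hq)
  · rw [div_lt_iff₀ (by positivity)]
    nlinarith

theorem optimal_effort_bound
    (μ α γ T : ℝ) (hμ : 0 < μ) (hα : 0 < α) (hγ : 0 < γ) (hT : 0 < T)
    (β : ℝ → ℝ) (hβc : Continuous β) (hβpos : ∀ t, 0 < β t)
    (hβper : Function.Periodic β T)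
    (βbar : ℝ) (hβbar : βbar = sSup (β '' Set.Icc 0 T))
    (hβbargt : γ + μ < βbar)
    (p₀ : ℝ) (hp₀ : p₀ = (μ + α) * (βbar / (γ + μ) - 1)) :
    sInf {e : ℝ | ∃ p S : ℝ → ℝ, Preventive μ α γ T β p S ∧
        e = (1 / T) * ∫ t in (0:ℝ)..T, p t * S t}
      ≤ p₀ * (μ + α) / (p₀ + μ + α)
    ∧ p₀ * (μ + α) / (p₀ + μ + α) < μ + α :=
  optimal_effort_bound_general μ α γ T hμ hα hγ hT β hβc hβper βbar hβbar hβbargt p₀ hp₀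
end

section
/- Along any T-periodic endemic solution (S₁,I₁) with I₁(t) = r/β(t) > 0, one has ⟨S₁⟩ = (γ+μ)⟨1/β⟩, ⟨I₁⟩ = r⟨1/β⟩, and ⟨βS₁I₁⟩ = r(γ+μ)⟨1/β⟩; consequently the Nash effort satisfies 𝔼[p_Nash] = 𝔼[p_opt] − r(γ+μ+α)⟨1/β⟩ < 𝔼[p_opt]. -/
open intervalIntegral

set_option maxHeartbeats 1000000

theorem nash_effort_comparison
    (μ α γ r T : ℝ) (hμ : 0 < μ) (hα : 0 < α) (hγ : 0 < γ) (hr : 0 < r)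
    (hT : 0 < T)
    (β : ℝ → ℝ) (hβc : Continuous β) (hβpos : ∀ t, 0 < β t)
    (hβper : Function.Periodic β T)
    (pNash : ℝ → ℝ) (hpc : Continuous pNash)
    (S₁ I₁ : ℝ → ℝ)
    (hS₁ : ∀ t, HasDerivAt S₁
      (μ + α - α * I₁ t - β t * I₁ t * S₁ t - pNash t * S₁ t
        - (μ + α) * S₁ t) t)
    (hI₁ : ∀ t, HasDerivAt I₁ (β t * I₁ t * S₁ t - (γ + μ) * I₁ t) t)
    (hS₁per : Function.Periodic S₁ T) (hI₁per : Function.Periodic I₁ T)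
    (hβI : ∀ t, β t * I₁ t = r) :
    (1 / T) * (∫ t in (0:ℝ)..T, S₁ t)
        = (γ + μ) * ((1 / T) * ∫ t in (0:ℝ)..T, 1 / β t) ∧
    (1 / T) * (∫ t in (0:ℝ)..T, I₁ t)
        = r * ((1 / T) * ∫ t in (0:ℝ)..T, 1 / β t) ∧
    (1 / T) * (∫ t in (0:ℝ)..T, β t * S₁ t * I₁ t)
        = r * (γ + μ) * ((1 / T) * ∫ t in (0:ℝ)..T, 1 / β t) ∧
    (1 / T) * (∫ t in (0:ℝ)..T, pNash t * S₁ t)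
        = (μ + α) * (1 - (γ + μ) * ((1 / T) * ∫ t in (0:ℝ)..T, 1 / β t))
          - r * (γ + μ + α) * ((1 / T) * ∫ t in (0:ℝ)..T, 1 / β t) ∧
    (1 / T) * (∫ t in (0:ℝ)..T, pNash t * S₁ t)
        < (μ + α) * (1 - (γ + μ) * ((1 / T) * ∫ t in (0:ℝ)..T, 1 / β t)) := by
  have hScont : Continuous S₁ := by
    rw [continuous_iff_continuousAt]; exact fun t => (hS₁ t).continuousAt
  have hIcont : Continuous I₁ := by
    rw [continuous_iff_continuousAt]; exact fun t => (hI₁ t).continuousAt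
  have hβne : ∀ t, β t ≠ 0 := fun t => (hβpos t).ne'
  have hI₁eq : ∀ t, I₁ t = r * (1 / β t) := by
    intro t
    rw [mul_one_div]
    exact (eq_div_iff (hβne t)).mpr (by linarith [hβI t])
  set A := ∫ t in (0:ℝ)..T, S₁ t with hA
  set B := ∫ t in (0:ℝ)..T, I₁ t with hB
  set M := ∫ t in (0:ℝ)..T, 1 / β t with hM
  set P := ∫ t in (0:ℝ)..T, pNash t * S₁ t with hP
  have hint1 : IntervalIntegrable (fun t => 1 / β t) MeasureTheory.volume 0 T :=
    (continuous_const.div hβc hβne).intervalIntegrable 0 T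
  have hintS : IntervalIntegrable S₁ MeasureTheory.volume 0 T :=
    hScont.intervalIntegrable 0 T
  have hintI : IntervalIntegrable I₁ MeasureTheory.volume 0 T :=
    hIcont.intervalIntegrable 0 T
  have hMpos : 0 < M := by
    rw [hM]
    apply intervalIntegral.intervalIntegral_pos_of_pos_on hint1
    · intro x _
      exact div_pos one_pos (hβpos x)
    · exact hT
  have hBM : B = r * M := by
    rw [hB, hM, ← intervalIntegral.integral_const_mul]
    exact intervalIntegral.integral_congr fun t _ => hI₁eq t
  -- FTC for I₁
  have hIper0 : I₁ T = I₁ 0 := by simpa using hI₁per 0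
  have hIftc : (∫ t in (0:ℝ)..T, (r * S₁ t - (γ + μ) * I₁ t)) = 0 := by
    have h1 : (∫ t in (0:ℝ)..T, (β t * I₁ t * S₁ t - (γ + μ) * I₁ t)) = I₁ T - I₁ 0 :=
      intervalIntegral.integral_eq_sub_of_hasDerivAt (fun t _ => hI₁ t)
        (Continuous.intervalIntegrable
          (((hβc.mul hIcont).mul hScont).sub (continuous_const.mul hIcont)) 0 T)
    have h2 : (∫ t in (0:ℝ)..T, (r * S₁ t - (γ + μ) * I₁ t))
        = ∫ t in (0:ℝ)..T, (β t * I₁ t * S₁ t - (γ + μ) * I₁ t) := by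
      apply intervalIntegral.integral_congr
      intro t _
      dsimp only
      rw [hβI t]
    rw [h2, h1, hIper0, sub_self]
  have hrA : r * A - (γ + μ) * B = 0 := by
    rw [hA, hB, ← intervalIntegral.integral_const_mul, ← intervalIntegral.integral_const_mul,
      ← intervalIntegral.integral_sub (hintS.const_mul r) (hintI.const_mul (γ + μ))]
    exact hIftc
  have hAM : A = (γ + μ) * M := by
    have : r * A = r * ((γ + μ) * M) := by rw [hBM] at hrA; linarith
    exact mul_left_cancel₀ hr.ne' this
  -- FTC for S₁
  have hSper0 : S₁ T = S₁ 0 := by simpa using hS₁per 0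
  have hSftc : (∫ t in (0:ℝ)..T,
      ((μ + α) - α * I₁ t - r * S₁ t - pNash t * S₁ t - (μ + α) * S₁ t)) = 0 := by
    have h1 : (∫ t in (0:ℝ)..T,
        (μ + α - α * I₁ t - β t * I₁ t * S₁ t - pNash t * S₁ t - (μ + α) * S₁ t))
        = S₁ T - S₁ 0 :=
      intervalIntegral.integral_eq_sub_of_hasDerivAt (fun t _ => hS₁ t)
        (Continuous.intervalIntegrable
          (((((continuous_const.sub (continuous_const.mul hIcont)).sub
            ((hβc.mul hIcont).mul hScont)).sub (hpc.mul hScont)).sub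
            (continuous_const.mul hScont))) 0 T)
    have h2 : (∫ t in (0:ℝ)..T,
        ((μ + α) - α * I₁ t - r * S₁ t - pNash t * S₁ t - (μ + α) * S₁ t))
        = ∫ t in (0:ℝ)..T,
        (μ + α - α * I₁ t - β t * I₁ t * S₁ t - pNash t * S₁ t - (μ + α) * S₁ t) := by
      apply intervalIntegral.integral_congr
      intro t _
      dsimp only
      rw [hβI t]
    rw [h2, h1, hSper0, sub_self]
  have hintP : IntervalIntegrable (fun t => pNash t * S₁ t) MeasureTheory.volume 0 T :=
    (hpc.mul hScont).intervalIntegrable 0 T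
  have hPval : (μ + α) * T - α * B - r * A - P - (μ + α) * A = 0 := by
    have e : (∫ t in (0:ℝ)..T,
        ((μ + α) - α * I₁ t - r * S₁ t - pNash t * S₁ t - (μ + α) * S₁ t))
        = (μ + α) * T - α * B - r * A - P - (μ + α) * A := by
      rw [hA, hB, hP]
      rw [intervalIntegral.integral_sub
            ((((_root_.intervalIntegrable_const).sub (hintI.const_mul α)).sub
              (hintS.const_mul r)).sub hintP) (hintS.const_mul (μ + α)),
          intervalIntegral.integral_sub
            (((_root_.intervalIntegrable_const).sub (hintI.const_mul α)).sub
              (hintS.const_mul r)) hintP,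
          intervalIntegral.integral_sub
            ((_root_.intervalIntegrable_const).sub (hintI.const_mul α)) (hintS.const_mul r),
          intervalIntegral.integral_sub (_root_.intervalIntegrable_const) (hintI.const_mul α),
          intervalIntegral.integral_const, intervalIntegral.integral_const_mul,
          intervalIntegral.integral_const_mul, intervalIntegral.integral_const_mul]
      simp [sub_zero]
      ring
    rw [← e]
    exact hSftc
  -- βS₁I₁ integral
  have hbetaSI : (∫ t in (0:ℝ)..T, β t * S₁ t * I₁ t) = r * A := by
    rw [hA, ← intervalIntegral.integral_const_mul]
    apply intervalIntegral.integral_congr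
    intro t _
    dsimp only
    rw [show β t * S₁ t * I₁ t = (β t * I₁ t) * S₁ t from by ring, hβI t]
  have hTne : T ≠ 0 := hT.ne'
  have hBMval : B = r * M := hBM
  refine ⟨?_, ?_, ?_, ?_, ?_⟩
  · rw [hAM]; ring
  · rw [hBM]; ring
  · rw [hbetaSI, hAM]; ring
  · have hPeq : P = (μ + α) * T - α * (r * M) - r * ((γ + μ) * M)
        - (μ + α) * ((γ + μ) * M) := by
      rw [hBM, hAM] at hPval; linarith
    rw [hPeq]
    field_simp
    ring
  · have hPeq : P = (μ + α) * T - α * (r * M) - r * ((γ + μ) * M)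
        - (μ + α) * ((γ + μ) * M) := by
      rw [hBM, hAM] at hPval; linarith
    rw [hPeq]
    have hMT : 0 < M / T := div_pos hMpos hT
    have expand : 1/T*((μ + α)*T - α*(r*M) - r*((γ+μ)*M) - (μ+α)*((γ+μ)*M))
        = (μ+α) - (α*r + r*(γ+μ) + (μ+α)*(γ+μ))*(M/T) := by
      field_simp
      ring
    have h2 : (μ+α)*(1-(γ+μ)*(1/T*M)) = (μ+α) - (μ+α)*(γ+μ)*(M/T) := by
      ring
    rw [expand, h2]
    nlinarith [mul_pos hα (mul_pos hr hMT), mul_pos hγ (mul_pos hr hMT),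
      mul_pos hμ (mul_pos hr hMT)]
end

section
/- In the constant case β(t) = β₀ > γ+μ, the unique constant endemic-equilibrium Nash vaccination level is p_Nash = (μ+α)(β₀/(γ+μ) − 1) − r(1 + α/(γ+μ)), which is strictly less than p_opt = (μ+α)(β₀/(γ+μ) − 1); p_Nash ≥ 0 provided r ≤ r* := (μ+α)(γ+μ)/(γ+μ+α) · (β₀/(γ+μ) − 1). -/
theorem constant_case_nash
    (μ α γ r β₀ : ℝ) (hμ : 0 < μ) (hα : 0 < α) (hγ : 0 < γ) (hr : 0 < r)
    (hβ : β₀ > γ + μ)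
    (S₁ I₁ pNash : ℝ)
    (hS₁ : S₁ = (γ + μ) / β₀) (hI₁ : I₁ = r / β₀)
    (hpNash : 0 = μ + α - α * I₁ - β₀ * I₁ * S₁ - pNash * S₁
      - (μ + α) * S₁) :
    pNash = (μ + α) * (β₀ / (γ + μ) - 1) - r * (1 + α / (γ + μ)) ∧
    pNash < (μ + α) * (β₀ / (γ + μ) - 1) ∧
    (r ≤ (μ + α) * (γ + μ) / (γ + μ + α) * (β₀ / (γ + μ) - 1)
      → 0 ≤ pNash) := by
  have hgm : 0 < γ + μ := by linarith
  have hβ0 : 0 < β₀ := by linarith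
  have hform : pNash = (μ + α) * (β₀ / (γ + μ) - 1) - r * (1 + α / (γ + μ)) := by
    subst hS₁ hI₁
    field_simp at hpNash ⊢
    nlinarith [hpNash]
  refine ⟨hform, ?_, ?_⟩
  · have : 0 < r * (1 + α / (γ + μ)) := by positivity
    linarith [hform]
  · intro hrle
    have hgma : 0 < γ + μ + α := by linarith
    have key : (μ + α) * (γ + μ) / (γ + μ + α) * (β₀ / (γ + μ) - 1) * (1 + α / (γ + μ))
        = (μ + α) * (β₀ / (γ + μ) - 1) := by
      field_simp
    have h1 : 0 < 1 + α / (γ + μ) := by positivity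
    have := mul_le_mul_of_nonneg_right hrle (le_of_lt h1)
    rw [key] at this
    linarith [hform]
end

section
/- For the critical transmission rate β(t) = (γ+μ)/(1 − K e^{−(μ+α)t}) on [0,2π) with K ∈ (0,1), the mean satisfies (1/(γ+μ))⟨β⟩ − 1 = (1/(2π(μ+α)))·log((1 − K e^{−2π(μ+α)})/(1−K)); that is, 2π(μ+α)(⟨β⟩/(γ+μ) − 1) = log((1 − K e^{−2π(μ+α)})/(1−K)) =: Γ > 0. -/
/-!
The critical rate is `β = (γ + μ) / (1 - K e^{-a t})` with `a = μ + α`, and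
`t + a⁻¹ log (1 - K e^{-a t})` is an antiderivative of `1 / (1 - K e^{-a t})`.
Integrating over one period gives the closed form of `⟨β⟩`; the logarithm is positive because
`K e^{-2π a} < K`.
-/

open Real intervalIntegral

lemma one_sub_mul_exp_pos {K x : ℝ} (hK : K < 1) (hx : x ≤ 0) : 0 < 1 - K * exp x := by
  rcases le_or_gt K 0 with hK0 | hK0
  · nlinarith [exp_pos x]
  · nlinarith [exp_le_one_iff.mpr hx]

lemma hasDerivAt_add_inv_mul_log_one_sub_mul_exp {a K t : ℝ} (ha : a ≠ 0)
    (ht : 1 - K * exp (-a * t) ≠ 0) :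
    HasDerivAt (fun s ↦ s + a⁻¹ * log (1 - K * exp (-a * s)))
      (1 / (1 - K * exp (-a * t))) t := by
  have hexp : HasDerivAt (fun s ↦ exp (-a * s)) (exp (-a * t) * -a) t := by
    simpa using ((hasDerivAt_id t).const_mul (-a)).exp
  have hlog := ((hexp.const_mul K).const_sub 1).log ht
  refine ((hasDerivAt_id' t).add (hlog.const_mul a⁻¹)).congr_deriv ?_
  generalize exp (-a * t) = e at ht ⊢
  field_simp
  ring

lemma integral_inv_one_sub_mul_exp {a K T : ℝ} (ha : 0 < a) (hK : K < 1) (hT : 0 ≤ T) :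
    ∫ t in (0 : ℝ)..T, 1 / (1 - K * exp (-a * t))
      = T + a⁻¹ * log ((1 - K * exp (-a * T)) / (1 - K)) := by
  have hpos : ∀ t ∈ Set.uIcc 0 T, 0 < 1 - K * exp (-a * t) := fun t ht ↦ by
    rw [Set.uIcc_of_le hT] at ht
    exact one_sub_mul_exp_pos hK (by nlinarith [ht.1])
  have hcont : ContinuousOn (fun t ↦ 1 / (1 - K * exp (-a * t))) (Set.uIcc 0 T) :=
    continuousOn_const.div (by fun_prop) fun t ht ↦ (hpos t ht).ne'
  rw [integral_eq_sub_of_hasDerivAt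
    (fun t ht ↦ hasDerivAt_add_inv_mul_log_one_sub_mul_exp ha.ne' (hpos t ht).ne')
    hcont.intervalIntegrable, log_div (hpos T Set.right_mem_uIcc).ne' (by linarith)]
  simp only [neg_mul, mul_zero, exp_zero, mul_one, zero_add]
  ring

lemma log_one_sub_mul_exp_div_one_sub_pos {K x : ℝ} (hK0 : 0 < K) (hK1 : K < 1) (hx : 0 < x) :
    0 < log ((1 - K * exp (-x)) / (1 - K)) := by
  have hexp : exp (-x) < 1 := exp_lt_one_iff.mpr (by linarith)
  exact log_pos ((one_lt_div (by linarith)).mpr (by nlinarith))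

theorem critical_beta_mean
    (μ α γ K : ℝ) (hμ : 0 < μ) (hα : 0 < α) (hγ : 0 < γ)
    (hK0 : 0 < K) (hK1 : K < 1)
    (β : ℝ → ℝ)
    (hβ : ∀ t, β t = (γ + μ) / (1 - K * Real.exp (-(μ + α) * t))) :
    2 * π * (μ + α) *
        (((1 / (2 * π)) * ∫ t in (0:ℝ)..(2 * π), β t) / (γ + μ) - 1)
      = Real.log ((1 - K * Real.exp (-(2 * π) * (μ + α))) / (1 - K)) ∧
    0 < Real.log ((1 - K * Real.exp (-(2 * π) * (μ + α))) / (1 - K)) := by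
  have hγμ : γ + μ ≠ 0 := by positivity
  have hβ' : β = fun t ↦ (γ + μ) * (1 / (1 - K * exp (-(μ + α) * t))) := by
    funext t
    rw [hβ, mul_one_div]
  have hmean := integral_inv_one_sub_mul_exp (by positivity : 0 < μ + α) hK1
    (by positivity : 0 ≤ 2 * π)
  rw [show -(2 * π) * (μ + α) = -(μ + α) * (2 * π) by ring, hβ', integral_const_mul, hmean]
  constructor
  · field_simp
    ring
  · rw [neg_mul]
    exact log_one_sub_mul_exp_div_one_sub_pos hK0 hK1 (by positivity)
end

section
/- The Floquet multipliers of the linearized disease-free 2×2 periodic system s' = −(μ+p(t))s − αs + αr, r' = p(t)s − (μ+α)r are ρ₁ = exp(−∫₀ᵀ(μ+α+p(τ))dτ) and ρ₂ = e^{−μT}, both strictly less than 1; hence the periodic disease-free solution is asymptotically stable within the disease-free subspace. -/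
open intervalIntegral

theorem floquet_multipliers
    (μ α T : ℝ) (hμ : 0 < μ) (hα : 0 < α) (hT : 0 < T)
    (p : ℝ → ℝ) (hpc : Continuous p) (hpnn : ∀ t, 0 ≤ p t)
    (hpper : Function.Periodic p T)
    (a b : ℝ)
    (ha : a = Real.exp (-∫ τ in (0:ℝ)..T, (μ + α + p τ)))
    (hb : b = ∫ τ in (0:ℝ)..T,
      α * Real.exp (-μ * τ - ∫ l in τ..T, (μ + α + p l)))
    (M : Matrix (Fin 2) (Fin 2) ℝ)
    (hM : M = !![a + b, b;
                 Real.exp (-μ * T) - a - b, Real.exp (-μ * T) - b]) :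
    Matrix.det (M - a • (1 : Matrix (Fin 2) (Fin 2) ℝ)) = 0 ∧
    Matrix.det (M - Real.exp (-μ * T) • (1 : Matrix (Fin 2) (Fin 2) ℝ)) = 0 ∧
    a < 1 ∧ Real.exp (-μ * T) < 1 := by
  have hint : 0 < ∫ τ in (0:ℝ)..T, (μ + α + p τ) := by
    apply intervalIntegral.intervalIntegral_pos_of_pos_on
    · exact (Continuous.intervalIntegrable (by continuity) 0 T)
    · intro x _
      have := hpnn x
      linarith
    · exact hT
  refine ⟨?_, ?_, ?_, ?_⟩
  · subst hM
    simp [Matrix.det_fin_two, Matrix.smul_apply, Matrix.one_apply]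
    ring
  · subst hM
    simp [Matrix.det_fin_two, Matrix.smul_apply, Matrix.one_apply]
    ring
  · rw [ha, Real.exp_lt_one_iff]
    linarith
  · rw [Real.exp_lt_one_iff]
    nlinarith
end
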